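/- arXiv:1511.08929 — 5 statements merged into one kernel-verified Lean document; each statement's English description precedes it below -/
import Mathlib

section
/- Let {T_n} be a sequence in κ(T) and m a nonnegative integer such that there exists C > 0 with ‖T_n x‖ ≤ C‖x‖ for every n and every x in the closure of the range of (T−I)^m. Then X_0 is a closed linear subspace of X and X_0 ⊆ ⋂_{k≥0} closure(range((T−I)^k)). -/
open Filter Topology

/-!
Every `S ∈ κ(T)` commutes with `T`, and `x - S x = ∑ t_j (x - T^j x)` with
`x - T^j x = (T - 1)(-∑_{i<j} T^i x)`. Since `X₀` is `T`-invariant, for `x ∈ X₀` the vectors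
`x - T_n x → x` therefore lie in the closure of `(T - 1) X₀`; so `X₀ ⊆ closure ((T - 1) X₀)`,
and iterating gives `X₀ ⊆ closure (range (T - 1)^k)` for every `k`. For `k = m` this puts `X₀`
inside a closed subspace on which the `T_n` are uniformly bounded, hence equicontinuous, and
the set of points where an equicontinuous family tends to `0` is closed.
-/

/-- Membership in κ(T): operators of the form Σ_{j≥0} t_j T^j with t_j ≥ 0,
Σ t_j = 1, and the series converging in operator norm. -/
def InKappa {X : Type*} [NormedAddCommGroup X] [NormedSpace ℂ X]
    (T S : X →L[ℂ] X) : Prop :=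
  ∃ t : ℕ → ℝ, (∀ j, 0 ≤ t j) ∧ HasSum t 1 ∧ HasSum (fun j => t j • T ^ j) S

theorem subset_closure_range_iterate {α : Type*} [TopologicalSpace α] {f : α → α}
    (hf : Continuous f) {s : Set α} (h : s ⊆ closure (f '' s)) :
    ∀ k, s ⊆ closure (Set.range f^[k])
  | 0 => by simp
  | k + 1 => calc
      s ⊆ closure (f '' s) := h
      _ ⊆ closure (f '' closure (Set.range f^[k])) :=
        closure_mono (Set.image_mono (subset_closure_range_iterate hf h k))
      _ ⊆ closure (Set.range f^[k + 1]) := by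
        rw [Function.iterate_succ', Set.range_comp]
        exact closure_minimal (image_closure_subset_closure_image hf) isClosed_closure

section TendstoZero

variable {𝕜 E F ι : Type*} [NontriviallyNormedField 𝕜] [NormedAddCommGroup E] [NormedSpace 𝕜 E]
  [NormedAddCommGroup F] [NormedSpace 𝕜 F] {l : Filter ι}

def tendstoZeroSubmodule (l : Filter ι) (A : ι → E →L[𝕜] F) : Submodule 𝕜 E where
  carrier := {x | Tendsto (fun i => A i x) l (𝓝 0)}
  add_mem' {x y} hx hy := by simpa using hx.add hy
  zero_mem' := tendsto_const_nhds.congr fun i => (map_zero (A i)).symm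
  smul_mem' c x hx := by simpa using hx.const_smul c

theorem mem_tendstoZeroSubmodule {A : ι → E →L[𝕜] F} {x : E} :
    x ∈ tendstoZeroSubmodule l A ↔ Tendsto (fun i => A i x) l (𝓝 0) :=
  Iff.rfl

theorem mapsTo_tendstoZeroSubmodule {A : ι → E →L[𝕜] E} {B : E →L[𝕜] E}
    (h : ∀ i, Commute B (A i)) :
    Set.MapsTo B (tendstoZeroSubmodule l A) (tendstoZeroSubmodule l A) := fun x hx => by
  have hBx := (B.continuous.tendsto 0).comp hx
  rw [map_zero] at hBx
  refine hBx.congr fun i => ?_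
  simp only [Function.comp_apply, ← mul_apply_eq_comp, (h i).eq]

theorem isClosed_tendstoZeroSubmodule {A : ι → E →L[𝕜] F} {R : Submodule 𝕜 E}
    (hR : IsClosed (R : Set E)) (hle : (tendstoZeroSubmodule l A : Set E) ⊆ R) {C : ℝ}
    (hbdd : ∀ i, ∀ x ∈ R, ‖A i x‖ ≤ C * ‖x‖) :
    IsClosed (tendstoZeroSubmodule l A : Set E) := by
  let f : ι → R →L[𝕜] F := fun i => (A i).comp R.subtypeL
  have hf : Equicontinuous ((↑) ∘ f) :=
    ((NormedSpace.equicontinuous_TFAE f).out 3 1).mp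
      (show ∃ C, ∀ i x, ‖f i x‖ ≤ C * ‖x‖ from ⟨C, fun i x => hbdd i x x.2⟩)
  have hclosed : IsClosed {x : R | Tendsto (f · x) l (𝓝 0)} :=
    hf.isClosed_setOfPred_tendsto continuous_const
  convert hR.isClosedEmbedding_subtypeVal.isClosedMap _ hclosed
  ext x
  exact ⟨fun hx => ⟨⟨x, hle hx⟩, hx, rfl⟩, by rintro ⟨y, hy, rfl⟩; exact hy⟩

end TendstoZero

section Kappa

variable {X : Type*} [NormedAddCommGroup X] [NormedSpace ℂ X] {T S : X →L[ℂ] X}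

theorem sub_pow_apply_mem_map_sub_one {p : Submodule ℂ X} (hp : Set.MapsTo T p p) {x : X}
    (hx : x ∈ p) (j : ℕ) : x - (T ^ j) x ∈ p.map (T - 1).toLinearMap := by
  refine ⟨-∑ i ∈ Finset.range j, (T ^ i) x, p.neg_mem (p.sum_mem fun i _ => ?_), ?_⟩
  · rw [FunLike.coe_pow_eq_iterate]
    exact hp.iterate i hx
  · have hgeom := congr($(mul_neg_geom_sum T j) x)
    rw [mul_apply_eq_comp, sum_apply] at hgeom
    rw [ContinuousLinearMap.coe_coe, map_neg, ← neg_apply, neg_sub, hgeom, sub_apply,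
      one_apply_eq_self]

theorem InKappa.commute (h : InKappa T S) : Commute T S := by
  obtain ⟨t, -, -, hS⟩ := h
  refine (hS.mul_left T).unique ((hS.mul_right T).congr_fun fun j => ?_)
  exact (((Commute.refl T).pow_right j).smul_right (t j)).eq

theorem InKappa.sub_apply_mem_closure_image_sub_one (h : InKappa T S) {p : Submodule ℂ X}
    (hp : Set.MapsTo T p p) {x : X} (hx : x ∈ p) :
    x - S x ∈ closure (⇑(T - 1) '' p) := by
  obtain ⟨t, -, ht, hS⟩ := h
  have hsum : HasSum (fun j => t j • (x - (T ^ j) x)) (x - S x) := by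
    simpa [smul_sub] using (ht.smul_const x).sub (hS.mapL (ContinuousLinearMap.apply ℂ X x))
  rw [← ContinuousLinearMap.coe_coe, ← Submodule.map_coe]
  refine mem_closure_of_tendsto hsum.tendsto_sum_nat (Eventually.of_forall fun N => ?_)
  exact Submodule.sum_mem _ fun j _ =>
    Submodule.smul_of_tower_mem _ _ (sub_pow_apply_mem_map_sub_one hp hx j)

theorem tendstoZeroSubmodule_subset_closure_image_sub_one {Tn : ℕ → X →L[ℂ] X}
    (hκ : ∀ n, InKappa T (Tn n)) :
    (tendstoZeroSubmodule atTop Tn : Set X) ⊆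
      closure (⇑(T - 1 : X →L[ℂ] X) '' tendstoZeroSubmodule atTop Tn) := by
  intro x hx
  have hT := mapsTo_tendstoZeroSubmodule (l := atTop) fun n => (hκ n).commute
  have hlim : Tendsto (fun n => x - Tn n x) atTop (𝓝 x) := by
    simpa using tendsto_const_nhds.sub (mem_tendstoZeroSubmodule.mp hx)
  exact isClosed_closure.mem_of_tendsto hlim
    (Eventually.of_forall fun n => (hκ n).sub_apply_mem_closure_image_sub_one hT hx)

end Kappa

theorem stmt0_general {X : Type*} [NormedAddCommGroup X] [NormedSpace ℂ X]
    (T : X →L[ℂ] X) (Tn : ℕ → X →L[ℂ] X) (hκ : ∀ n, InKappa T (Tn n))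
    (m : ℕ) (C : ℝ)
    (hbdd : ∀ n, ∀ x ∈ closure (Set.range ⇑((T - 1) ^ m)), ‖Tn n x‖ ≤ C * ‖x‖) :
    ∃ S : Submodule ℂ X,
      (S : Set X) = {x : X | Tendsto (fun n => ‖Tn n x‖) atTop (𝓝 0)} ∧
      IsClosed (S : Set X) ∧
      ∀ k : ℕ, (S : Set X) ⊆ closure (Set.range ⇑((T - 1) ^ k)) := by
  have hsub (k : ℕ) : (tendstoZeroSubmodule atTop Tn : Set X) ⊆
      closure (Set.range ⇑((T - 1) ^ k)) := by
    rw [FunLike.coe_pow_eq_iterate]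
    exact subset_closure_range_iterate (T - 1).continuous
      (tendstoZeroSubmodule_subset_closure_image_sub_one hκ) k
  let R := LinearMap.range ((T - 1) ^ m).toLinearMap
  have hR : (R.topologicalClosure : Set X) = closure (Set.range ⇑((T - 1) ^ m)) := by
    rw [Submodule.topologicalClosure_coe, LinearMap.coe_range]; rfl
  refine ⟨tendstoZeroSubmodule atTop Tn, ?_, ?_, hsub⟩
  · ext x
    exact tendsto_zero_iff_norm_tendsto_zero
  · exact isClosed_tendstoZeroSubmodule R.isClosed_topologicalClosure (hR ▸ hsub m)
      fun n x hx => hbdd n x (hR ▸ hx)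

/-- If a sequence {T_n} in κ(T) is bounded on the closure of the range of (T−I)^m,
then X₀ = {x : ‖T_n x‖ → 0} is a closed linear subspace of X contained in
⋂_{k≥0} closure(range((T−I)^k)). -/
theorem stmt0 {X : Type*} [NormedAddCommGroup X] [NormedSpace ℂ X] [CompleteSpace X]
    (T : X →L[ℂ] X) (Tn : ℕ → X →L[ℂ] X) (hκ : ∀ n, InKappa T (Tn n))
    (m : ℕ) (C : ℝ) (hC : 0 < C)
    (hbdd : ∀ n, ∀ x ∈ closure (Set.range ⇑((T - 1) ^ m)), ‖Tn n x‖ ≤ C * ‖x‖) :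
    ∃ S : Submodule ℂ X,
      (S : Set X) = {x : X | Tendsto (fun n => ‖Tn n x‖) atTop (𝓝 0)} ∧
      IsClosed (S : Set X) ∧
      ∀ k : ℕ, (S : Set X) ⊆ closure (Set.range ⇑((T - 1) ^ k)) :=
  stmt0_general T Tn hκ m C hbdd
end

section
/- Let {T_n} be a sequence in κ(T) and let k ≥ m be nonnegative integers. Assume there exists C > 0 with ‖T_n x‖ ≤ C‖x‖ for every n and every x in the closure of the range of (T−I)^m, and that ‖T_n (T−I)^k x‖ → 0 as n → ∞ for every x ∈ X. Then X_0 = closure(range((T−I)^k)). -/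
open Filter Topology

/-! Each `S ∈ κ(T)` gives `x - S x = ∑ t_j (x - T^j x)` with `x - T^j x ∈ range (T - 1)`, so
`1 - S` maps the closure of `range (T - 1)^j` into the closure of `range (T - 1)^(j+1)`; since
`x - T_n x → x` for `x ∈ X₀`, induction puts `X₀` inside every such closure. Conversely,
`T_n → 0` strongly on `range (T - 1)^k`, and the uniform bound on
`closure (range (T - 1)^m) ⊇ closure (range (T - 1)^k)` makes `{T_n}` equicontinuous there,
so the convergence passes to the closure. -/

theorem ContinuousLinearMap.coe_topologicalClosure_range {R M N : Type*} [Semiring R]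
    [AddCommMonoid M] [TopologicalSpace M] [Module R M] [AddCommMonoid N] [TopologicalSpace N]
    [Module R N] [ContinuousAdd N] [ContinuousConstSMul R N] (f : M →L[R] N) :
    ((LinearMap.range (f : M →ₗ[R] N)).topologicalClosure : Set N) = closure (Set.range f) := by
  rw [Submodule.topologicalClosure_coe, LinearMap.coe_range, coe_coe]

open Finset in
theorem pow_sub_one_mul_sub_one_pow {R : Type*} [Ring R] (a : R) (i j : ℕ) :
    (a ^ i - 1) * (a - 1) ^ j = (a - 1) ^ (j + 1) * ∑ l ∈ range i, a ^ l := by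
  have hc : Commute (a - 1) (∑ l ∈ range i, a ^ l) :=
    (mul_geom_sum a i).trans (geom_sum_mul a i).symm
  rw [← mul_geom_sum, mul_assoc, ← (hc.pow_left j).eq, ← mul_assoc, ← pow_succ']

theorem tendsto_apply_of_mem_topologicalClosure {𝕜 E F ι : Type*} [NormedField 𝕜]
    [SeminormedAddCommGroup E] [NormedSpace 𝕜 E] [SeminormedAddCommGroup F] [NormedSpace 𝕜 F]
    {l : Filter ι} {f : ι → E →L[𝕜] F} {p : Submodule 𝕜 E} {C : ℝ}
    (hbdd : ∀ i, ∀ y ∈ p.topologicalClosure, ‖f i y‖ ≤ C * ‖y‖)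
    (hconv : ∀ y ∈ p, Tendsto (fun i => f i y) l (𝓝 0)) {x : E} (hx : x ∈ p.topologicalClosure) :
    Tendsto (fun i => f i x) l (𝓝 0) := by
  have hlip (i : ι) : LipschitzWith ‖C‖₊ (fun y : p.topologicalClosure => f i y) :=
    LipschitzWith.of_dist_le_mul fun y z => by
      rw [dist_eq_norm, dist_eq_norm, ← map_sub, coe_nnnorm]
      exact (hbdd i _ (y - z).2).trans
        (mul_le_mul_of_nonneg_right (Real.le_norm_self C) (norm_nonneg _))
  have hxs : (⟨x, hx⟩ : p.topologicalClosure) ∈ closure (Subtype.val ⁻¹' (p : Set E)) := by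
    rw [closure_subtype]
    refine closure_mono (s := p) ?_ (by rwa [← p.topologicalClosure_coe])
    intro y hy
    exact ⟨⟨y, p.le_topologicalClosure hy⟩, hy, rfl⟩
  exact ((LipschitzWith.uniformEquicontinuous _ _ hlip).equicontinuous _).tendsto_of_mem_closure
    (f := fun _ => 0) tendsto_const_nhds (fun y => hconv y) hxs

section Kappa

variable {X : Type*} [NormedAddCommGroup X] [NormedSpace ℂ X] {T S : X →L[ℂ] X}

theorem InKappa.sub_apply_mem (h : InKappa T S) {W : Submodule ℂ X} (hW : IsClosed (W : Set X))
    {x : X} (hx : ∀ j, x - (T ^ j) x ∈ W) : x - S x ∈ W := by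
  obtain ⟨t, -, ht, hS⟩ := h
  have hsum : HasSum (fun j => t j • (x - (T ^ j) x)) (x - S x) := by
    simpa only [smul_sub, one_smul, ContinuousLinearMap.apply_apply, smul_apply] using
      (ht.smul_const x).sub (hS.mapL (ContinuousLinearMap.apply ℂ X x))
  exact hW.mem_of_tendsto hsum.tendsto_sum_nat <| Eventually.of_forall fun n =>
    W.sum_mem fun j _ => W.smul_of_tower_mem (t j) (hx j)

theorem InKappa.sub_apply_mem_closure_range_pow_succ (h : InKappa T S) {j : ℕ} {x : X}
    (hx : x ∈ closure (Set.range ⇑((T - 1) ^ j))) :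
    x - S x ∈ closure (Set.range ⇑((T - 1) ^ (j + 1))) := by
  set R := LinearMap.range (((T - 1) ^ (j + 1) : X →L[ℂ] X) : X →ₗ[ℂ] X)
  have hmaps : Set.MapsTo (fun y => y - S y) (Set.range ⇑((T - 1) ^ j)) R.topologicalClosure := by
    rintro _ ⟨z, rfl⟩
    refine h.sub_apply_mem R.isClosed_topologicalClosure fun i =>
      R.le_topologicalClosure ⟨-(∑ l ∈ Finset.range i, T ^ l) z, ?_⟩
    have := congrArg (fun A : X →L[ℂ] X => A z) (pow_sub_one_mul_sub_one_pow T i j)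
    simp only [mul_apply_eq_comp, sub_apply, one_apply_eq_self] at this
    rw [map_neg, ContinuousLinearMap.coe_coe, ← this, neg_sub]
  rw [← ContinuousLinearMap.coe_topologicalClosure_range,
    ← R.isClosed_topologicalClosure.closure_eq]
  exact map_mem_closure (f := fun y => y - S y) (by fun_prop) hx hmaps

theorem mem_closure_range_sub_one_pow_of_tendsto {ι : Type*} {l : Filter ι} [l.NeBot]
    {S : ι → X →L[ℂ] X} (hS : ∀ i, InKappa T (S i)) {x : X}
    (hx : Tendsto (fun i => S i x) l (𝓝 0)) (j : ℕ) :
    x ∈ closure (Set.range ⇑((T - 1) ^ j)) := by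
  induction j with
  | zero => simp [ContinuousLinearMap.one_def]
  | succ j ih =>
    exact isClosed_closure.mem_of_tendsto (by simpa using hx.const_sub x)
      (Eventually.of_forall fun i => (hS i).sub_apply_mem_closure_range_pow_succ ih)

end Kappa

theorem stmt1_general {X : Type*} [NormedAddCommGroup X] [NormedSpace ℂ X]
    (T : X →L[ℂ] X) (Tn : ℕ → X →L[ℂ] X) (hκ : ∀ n, InKappa T (Tn n))
    (k m : ℕ) (hkm : m ≤ k) (C : ℝ)
    (hbdd : ∀ n, ∀ x ∈ closure (Set.range ⇑((T - 1) ^ m)), ‖Tn n x‖ ≤ C * ‖x‖)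
    (hconv : ∀ x : X, Tendsto (fun n => ‖Tn n (((T - 1) ^ k) x)‖) atTop (𝓝 0)) :
    {x : X | Tendsto (fun n => ‖Tn n x‖) atTop (𝓝 0)}
      = closure (Set.range ⇑((T - 1) ^ k)) := by
  have hrange : Set.range ⇑((T - 1) ^ k) ⊆ Set.range ⇑((T - 1) ^ m) := by
    rw [← pow_mul_pow_sub (T - 1) hkm]
    exact Set.range_comp_subset_range ⇑((T - 1) ^ (k - m)) ⇑((T - 1) ^ m)
  ext x
  rw [Set.mem_ofPred_eq, ← tendsto_zero_iff_norm_tendsto_zero]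
  refine ⟨fun hx => mem_closure_range_sub_one_pow_of_tendsto hκ hx k, fun hx => ?_⟩
  rw [← ContinuousLinearMap.coe_topologicalClosure_range, SetLike.mem_coe] at hx
  refine tendsto_apply_of_mem_topologicalClosure (fun n y hy => hbdd n y ?_) ?_ hx
  · rw [← SetLike.mem_coe, ContinuousLinearMap.coe_topologicalClosure_range] at hy
    exact closure_mono hrange hy
  · rintro _ ⟨z, rfl⟩
    exact tendsto_zero_iff_norm_tendsto_zero.2 (hconv z)

/-- If a sequence {T_n} in κ(T) is bounded on the closure of the range of (T−I)^m,
k ≥ m, and T_n (T−I)^k → 0 strongly, then X₀ = closure(range((T−I)^k)). -/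
theorem stmt1 {X : Type*} [NormedAddCommGroup X] [NormedSpace ℂ X] [CompleteSpace X]
    (T : X →L[ℂ] X) (Tn : ℕ → X →L[ℂ] X) (hκ : ∀ n, InKappa T (Tn n))
    (k m : ℕ) (hkm : m ≤ k) (C : ℝ) (hC : 0 < C)
    (hbdd : ∀ n, ∀ x ∈ closure (Set.range ⇑((T - 1) ^ m)), ‖Tn n x‖ ≤ C * ‖x‖)
    (hconv : ∀ x : X, Tendsto (fun n => ‖Tn n (((T - 1) ^ k) x)‖) atTop (𝓝 0)) :
    {x : X | Tendsto (fun n => ‖Tn n x‖) atTop (𝓝 0)}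
      = closure (Set.range ⇑((T - 1) ^ k)) :=
  stmt1_general T Tn hκ k m hkm C hbdd hconv
end

section
/- Let {T_n} be a sequence in κ(T) which is (n₀,m)-regular for nonnegative integers n₀, m, and assume there exists C > 0 with ‖T_n x‖ ≤ C‖x‖ for every n and every x in the closure of the range of (T−I)^m. Then for any integer k > m, one has X_0 = closure(range((T−I)^k)) if and only if for every x in the closure of the range of (T−I)^m, Σ_{l=0}^{k−m} (−1)^l · binom(k−m, l) · T_{n+l·n₀} x → 0 as n → ∞. -/
open Filter Topology

/-- (n₀,m)-regularity: ‖(T T_n − T_{n+n₀})x‖ → 0 for every x ∈ range((T−I)^m). -/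
def RegularSeq {X : Type*} [NormedAddCommGroup X] [NormedSpace ℂ X]
    (T : X →L[ℂ] X) (Tn : ℕ → X →L[ℂ] X) (n₀ m : ℕ) : Prop :=
  ∀ x ∈ Set.range ⇑((T - 1) ^ m),
    Tendsto (fun n => ‖T (Tn n x) - Tn (n + n₀) x‖) atTop (𝓝 0)

/-!
Write `k = D + m`. Every `S ∈ κ(T)` commutes with `T`, and regularity gives
`T_{n + l n₀} x - T^l T_n x → 0` for `x ∈ range (T - I)^m`; by the binomial formula the alternating
sum at `x = (T - I)^m w` is then asymptotic to `T_n (I - T)^D x = ± T_n (T - I)^k w`. So on the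
(non-closed) ranges the two conditions of the theorem match, and the uniform bound on
`closure (range (T - I)^m)` carries both convergences over to the closures. The remaining inclusion
`X₀ ⊆ closure (range (T - I)^k)` holds because `x = lim (x - T_n x)` and, for `S ∈ κ(T)`,
`y - S y = Σ t_j (y - T^j y)` lies in `closure (range (T - I))`, so `I - S` raises the power `j`
in `closure (range (T - I)^j)` by one.
-/

theorem one_sub_pow_eq_sum {A : Type*} [Ring A] [Module ℝ A] (a : A) (D : ℕ) :
    (1 - a) ^ D = ∑ l ∈ Finset.range (D + 1), ((-1 : ℝ) ^ l * (D.choose l : ℝ)) • a ^ l := by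
  rw [sub_eq_neg_add, (Commute.one_right (-a)).add_pow]
  refine Finset.sum_congr rfl fun l _ => ?_
  have hcoeff : (-1 : ℝ) ^ l * (D.choose l : ℝ) = (((-1) ^ l * D.choose l : ℤ) : ℝ) := by
    push_cast; ring
  rw [hcoeff, Int.cast_smul_eq_zsmul, zsmul_eq_mul]
  push_cast
  rw [one_pow, mul_one, neg_pow, mul_assoc, (Nat.cast_commute _ _).symm.eq, mul_assoc]

theorem tendsto_zero_of_mem_closure_of_norm_le {ι E F 𝓕 : Type*} [SeminormedAddCommGroup E]
    [SeminormedAddCommGroup F] [FunLike 𝓕 E F] [AddMonoidHomClass 𝓕 E F] {l : Filter ι}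
    {L : ι → 𝓕} {V : AddSubgroup E} {K : ℝ} (hbound : ∀ i, ∀ v ∈ V, ‖L i v‖ ≤ K * ‖v‖)
    {S : Set E} (hSV : S ⊆ V) (hS : ∀ y ∈ S, Tendsto (fun i => L i y) l (𝓝 0))
    {x : E} (hxV : x ∈ V) (hx : x ∈ closure S) :
    Tendsto (fun i => L i x) l (𝓝 0) := by
  rw [Metric.tendsto_nhds]
  intro ε hε
  obtain ⟨y, hyS, hxy⟩ := Metric.mem_closure_iff.mp hx (ε / 2 / (|K| + 1)) (by positivity)
  filter_upwards [Metric.tendsto_nhds.mp (hS y hyS) (ε / 2) (half_pos hε)] with i hi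
  rw [dist_zero_right] at hi ⊢
  rw [dist_eq_norm] at hxy
  have hdiff : ‖L i (x - y)‖ ≤ (|K| + 1) * ‖x - y‖ :=
    (hbound i _ (V.sub_mem hxV (hSV hyS))).trans
      (mul_le_mul_of_nonneg_right (by linarith [le_abs_self K]) (norm_nonneg _))
  calc ‖L i x‖ = ‖L i (x - y) + L i y‖ := by rw [map_sub, sub_add_cancel]
    _ ≤ ‖L i (x - y)‖ + ‖L i y‖ := norm_add_le _ _
    _ < (|K| + 1) * (ε / 2 / (|K| + 1)) + ε / 2 := by gcongr; exact hdiff.trans_lt (by gcongr)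
    _ = ε := by field_simp; ring

section

variable {X : Type*} [NormedAddCommGroup X] [NormedSpace ℂ X]

theorem coe_topologicalClosure_range (A : X →L[ℂ] X) :
    ((LinearMap.range (A : X →ₗ[ℂ] X)).topologicalClosure : Set X) = closure (Set.range A) := by
  rw [Submodule.topologicalClosure_coe, LinearMap.coe_range, ContinuousLinearMap.coe_coe]

namespace InKappa

variable {T S : X →L[ℂ] X}

theorem commute_s3 (h : InKappa T S) : Commute T S := by
  obtain ⟨t, -, -, hS⟩ := h
  have hL : HasSum (fun j => T * (t j • T ^ j)) (T * S) :=
    hS.mapL (ContinuousLinearMap.mul ℂ (X →L[ℂ] X) T)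
  have hR : HasSum (fun j => (t j • T ^ j) * T) (S * T) :=
    hS.mapL ((ContinuousLinearMap.mul ℂ (X →L[ℂ] X)).flip T)
  refine hL.unique (hR.congr_fun fun j => ?_)
  rw [mul_smul_comm, smul_mul_assoc, ← pow_succ, ← pow_succ']

theorem sub_apply_mem_closure_range (h : InKappa T S) (y : X) :
    y - S y ∈ closure (Set.range ⇑(T - 1)) := by
  obtain ⟨t, -, ht, hS⟩ := h
  have hsum : HasSum (fun j => t j • (y - (T ^ j) y)) (y - S y) := by
    simpa [smul_sub] using (ht.smul_const y).sub (hS.mapL (ContinuousLinearMap.apply ℂ X y))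
  have hterm : ∀ j, y - (T ^ j) y = (T - 1) (-(∑ i ∈ Finset.range j, T ^ i) y) := by
    intro j
    rw [map_neg, ← mul_apply_eq_comp, mul_geom_sum]
    simp
  let W := LinearMap.range ((T - 1 : X →L[ℂ] X) : X →ₗ[ℂ] X)
  refine isClosed_closure.mem_of_tendsto hsum.tendsto_sum_nat
    (Eventually.of_forall fun s => subset_closure ?_)
  change _ ∈ (W : Set X)
  refine W.sum_mem fun j _ => ?_
  rw [hterm, ← Complex.coe_smul]
  exact W.smul_mem _ ⟨_, rfl⟩

theorem mapsTo_closure_range_pow (h : InKappa T S) (j : ℕ) :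
    Set.MapsTo ⇑(1 - S) (closure (Set.range ⇑((T - 1) ^ j)))
      (closure (Set.range ⇑((T - 1) ^ (j + 1)))) := by
  refine Set.MapsTo.closure_left ?_ (1 - S).continuous isClosed_closure
  rintro _ ⟨w, rfl⟩
  have hcomm : Commute ((T - 1) ^ j) (1 - S) :=
    (Commute.one_right _).sub_right ((h.commute_s3.sub_left (Commute.one_left S)).pow_left j)
  have hpow : Set.MapsTo ⇑((T - 1) ^ j) (closure (Set.range ⇑(T - 1)))
      (closure (Set.range ⇑((T - 1) ^ (j + 1)))) := by
    refine Set.MapsTo.closure ?_ ((T - 1) ^ j).continuous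
    rintro _ ⟨v, rfl⟩
    exact ⟨v, by rw [pow_succ, mul_apply_eq_comp]⟩
  rw [← mul_apply_eq_comp, ← hcomm.eq, mul_apply_eq_comp]
  exact hpow (by simpa using h.sub_apply_mem_closure_range w)

end InKappa

theorem mem_closure_range_pow_of_tendsto {T : X →L[ℂ] X} {Tn : ℕ → X →L[ℂ] X}
    (hκ : ∀ n, InKappa T (Tn n)) {x : X} (hx : Tendsto (fun n => Tn n x) atTop (𝓝 0))
    (j : ℕ) : x ∈ closure (Set.range ⇑((T - 1) ^ j)) := by
  induction j with
  | zero => exact subset_closure ⟨x, by simp⟩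
  | succ j ih =>
    have hlim : Tendsto (fun n => (1 - Tn n) x) atTop (𝓝 x) := by
      simpa using tendsto_const_nhds.sub hx
    exact isClosed_closure.mem_of_tendsto hlim
      (Eventually.of_forall fun n => (hκ n).mapsTo_closure_range_pow j ih)

noncomputable def alternatingShiftSum (Tn : ℕ → X →L[ℂ] X) (n₀ D n : ℕ) : X →L[ℂ] X :=
  ∑ l ∈ Finset.range (D + 1), ((-1 : ℝ) ^ l * (D.choose l : ℝ)) • Tn (n + l * n₀)

@[simp]
theorem alternatingShiftSum_apply (Tn : ℕ → X →L[ℂ] X) (n₀ D n : ℕ) (x : X) :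
    alternatingShiftSum Tn n₀ D n x =
      ∑ l ∈ Finset.range (D + 1), ((-1 : ℝ) ^ l * (D.choose l : ℝ)) • Tn (n + l * n₀) x := by
  simp [alternatingShiftSum]

theorem norm_alternatingShiftSum_apply_le {Tn : ℕ → X →L[ℂ] X} {C : ℝ} {v : X}
    (hv : ∀ n, ‖Tn n v‖ ≤ C * ‖v‖) (n₀ D n : ℕ) :
    ‖alternatingShiftSum Tn n₀ D n v‖ ≤ 2 ^ D * C * ‖v‖ := by
  rw [alternatingShiftSum_apply]
  calc _ ≤ ∑ l ∈ Finset.range (D + 1),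
        ‖((-1 : ℝ) ^ l * (D.choose l : ℝ)) • Tn (n + l * n₀) v‖ := norm_sum_le _ _
    _ ≤ ∑ l ∈ Finset.range (D + 1), (D.choose l : ℝ) * (C * ‖v‖) := by
        refine Finset.sum_le_sum fun l _ => ?_
        rw [norm_smul, norm_mul, norm_pow, norm_neg, norm_one, one_pow, one_mul,
          Real.norm_natCast]
        exact mul_le_mul_of_nonneg_left (hv _) (Nat.cast_nonneg _)
    _ = 2 ^ D * C * ‖v‖ := by
        rw [← Finset.sum_mul, ← Nat.cast_sum, Nat.sum_range_choose]
        push_cast; ring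

namespace RegularSeq

variable {T : X →L[ℂ] X} {Tn : ℕ → X →L[ℂ] X} {n₀ m : ℕ}

theorem tendsto_shift_sub_pow_apply (hreg : RegularSeq T Tn n₀ m) {x : X}
    (hx : x ∈ Set.range ⇑((T - 1) ^ m)) (l : ℕ) :
    Tendsto (fun n => Tn (n + l * n₀) x - (T ^ l) (Tn n x)) atTop (𝓝 0) := by
  induction l with
  | zero => simp
  | succ l ih =>
    have hstep : Tendsto (fun n => Tn (n + l * n₀ + n₀) x - T (Tn (n + l * n₀) x))
        atTop (𝓝 0) := by
      have := (tendsto_zero_iff_norm_tendsto_zero.mpr (hreg x hx)).neg.comp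
        (tendsto_add_atTop_nat (l * n₀))
      simpa [Function.comp_def] using this
    have hT := (T.continuous.tendsto 0).comp ih
    rw [map_zero] at hT
    simpa [Function.comp_def, add_mul, ← add_assoc, pow_succ'] using hstep.add hT

theorem tendsto_alternatingShiftSum_iff (hκ : ∀ n, InKappa T (Tn n))
    (hreg : RegularSeq T Tn n₀ m) (D : ℕ) (w : X) :
    Tendsto (fun n => alternatingShiftSum Tn n₀ D n (((T - 1) ^ m) w)) atTop (𝓝 0) ↔
      Tendsto (fun n => Tn n (((T - 1) ^ (D + m)) w)) atTop (𝓝 0) := by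
  set x := ((T - 1) ^ m) w
  have hx : x ∈ Set.range ⇑((T - 1) ^ m) := ⟨w, rfl⟩
  rw [pow_add, mul_apply_eq_comp]
  have hpow : ((1 - T) ^ D : X →L[ℂ] X) = (-1 : ℂ) ^ D • (T - 1) ^ D := by
    rw [← neg_sub, ← neg_one_smul ℂ (T - 1), smul_pow]
  have hdiff : Tendsto (fun n => alternatingShiftSum Tn n₀ D n x -
      (-1 : ℂ) ^ D • Tn n (((T - 1) ^ D) x)) atTop (𝓝 0) := by
    have := tendsto_finsetSum (Finset.range (D + 1)) fun l _ =>
      (hreg.tendsto_shift_sub_pow_apply hx l).const_smul ((-1 : ℝ) ^ l * (D.choose l : ℝ))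
    simp only [smul_zero, Finset.sum_const_zero] at this
    refine this.congr fun n => ?_
    have hcomm : Commute ((1 - T) ^ D) (Tn n) :=
      ((Commute.one_left _).sub_left (hκ n).commute_s3).pow_left D
    have hbinom : (-1 : ℂ) ^ D • Tn n (((T - 1) ^ D) x) =
        ∑ l ∈ Finset.range (D + 1), ((-1 : ℝ) ^ l * (D.choose l : ℝ)) • (T ^ l) (Tn n x) :=
      calc (-1 : ℂ) ^ D • Tn n (((T - 1) ^ D) x) = Tn n (((1 - T) ^ D) x) := by
            rw [hpow, smul_apply, map_smul]
        _ = ((1 - T) ^ D) (Tn n x) := by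
            rw [← mul_apply_eq_comp, ← hcomm.eq, mul_apply_eq_comp]
        _ = _ := by
            rw [one_sub_pow_eq_sum, sum_apply]
            simp only [smul_apply]
    rw [hbinom, alternatingShiftSum_apply, ← Finset.sum_sub_distrib]
    simp only [smul_sub]
  have hsign : (-1 : ℂ) ^ D ≠ 0 := by simp
  rw [← tendsto_const_smul_iff₀ (f := fun n => Tn n (((T - 1) ^ D) x)) hsign, smul_zero]
  constructor
  · intro h
    have := h.sub hdiff
    rw [sub_zero] at this
    exact this.congr fun n => sub_sub_cancel _ _
  · intro h
    have := hdiff.add h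
    rw [add_zero] at this
    exact this.congr fun n => sub_add_cancel _ _

end RegularSeq

end

theorem stmt3_general {X : Type*} [NormedAddCommGroup X] [NormedSpace ℂ X]
    (T : X →L[ℂ] X) (Tn : ℕ → X →L[ℂ] X) (hκ : ∀ n, InKappa T (Tn n))
    (n₀ m : ℕ) (hreg : RegularSeq T Tn n₀ m)
    (C : ℝ)
    (hbdd : ∀ n, ∀ x ∈ closure (Set.range ⇑((T - 1) ^ m)), ‖Tn n x‖ ≤ C * ‖x‖)
    (k : ℕ) (hk : m < k) :
    {x : X | Tendsto (fun n => ‖Tn n x‖) atTop (𝓝 0)}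
        = closure (Set.range ⇑((T - 1) ^ k))
      ↔ ∀ x ∈ closure (Set.range ⇑((T - 1) ^ m)),
          Tendsto
            (fun n => ∑ l ∈ Finset.range (k - m + 1),
              ((-1 : ℝ) ^ l * ((k - m).choose l : ℝ)) • Tn (n + l * n₀) x)
            atTop (𝓝 0) := by
  obtain ⟨D, rfl⟩ : ∃ D, k = D + m := ⟨k - m, (Nat.sub_add_cancel hk.le).symm⟩
  simp only [Nat.add_sub_cancel, ← alternatingShiftSum_apply]
  let V : AddSubgroup X :=
    (LinearMap.range (((T - 1) ^ m : X →L[ℂ] X) : X →ₗ[ℂ] X)).topologicalClosure.toAddSubgroup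
  have hV : (V : Set X) = closure (Set.range ⇑((T - 1) ^ m)) := coe_topologicalClosure_range _
  have hrange : Set.range ⇑((T - 1) ^ (D + m)) ⊆ V := by
    rintro _ ⟨w, rfl⟩
    rw [hV, add_comm, pow_add, mul_apply_eq_comp]
    exact subset_closure ⟨_, rfl⟩
  rw [← hV] at hbdd ⊢
  constructor
  · intro hX x hx
    refine tendsto_zero_of_mem_closure_of_norm_le (S := Set.range ⇑((T - 1) ^ m))
      (fun n v hv => norm_alternatingShiftSum_apply_le (hbdd · v hv) n₀ D n)
      (hV ▸ subset_closure) ?_ hx (hV ▸ hx)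
    rintro _ ⟨w, rfl⟩
    have hw : ((T - 1) ^ (D + m)) w ∈ {x : X | Tendsto (fun n => ‖Tn n x‖) atTop (𝓝 0)} :=
      hX ▸ subset_closure ⟨w, rfl⟩
    exact (hreg.tendsto_alternatingShiftSum_iff hκ D w).mpr
      (tendsto_zero_iff_norm_tendsto_zero.mpr hw)
  · intro H
    ext x
    refine ⟨fun hx => mem_closure_range_pow_of_tendsto hκ
      (tendsto_zero_iff_norm_tendsto_zero.mpr hx) (D + m), fun hx => ?_⟩
    refine tendsto_zero_iff_norm_tendsto_zero.mp (tendsto_zero_of_mem_closure_of_norm_le hbdd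
      hrange ?_ (closure_minimal hrange (hV ▸ isClosed_closure) hx) hx)
    rintro _ ⟨w, rfl⟩
    exact (hreg.tendsto_alternatingShiftSum_iff hκ D w).mp (H _ (hV ▸ subset_closure ⟨w, rfl⟩))

/-- For an (n₀,m)-regular sequence {T_n} in κ(T), bounded on closure(range((T−I)^m)),
and k > m: X₀ = closure(range((T−I)^k)) iff the alternating binomial combinations
Σ_{l=0}^{k−m} (−1)^l C(k−m,l) T_{n+l n₀} x tend to 0 for x ∈ closure(range((T−I)^m)). -/
theorem stmt3 {X : Type*} [NormedAddCommGroup X] [NormedSpace ℂ X] [CompleteSpace X]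
    (T : X →L[ℂ] X) (Tn : ℕ → X →L[ℂ] X) (hκ : ∀ n, InKappa T (Tn n))
    (n₀ m : ℕ) (hreg : RegularSeq T Tn n₀ m)
    (C : ℝ) (hC : 0 < C)
    (hbdd : ∀ n, ∀ x ∈ closure (Set.range ⇑((T - 1) ^ m)), ‖Tn n x‖ ≤ C * ‖x‖)
    (k : ℕ) (hk : m < k) :
    {x : X | Tendsto (fun n => ‖Tn n x‖) atTop (𝓝 0)}
        = closure (Set.range ⇑((T - 1) ^ k))
      ↔ ∀ x ∈ closure (Set.range ⇑((T - 1) ^ m)),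
          Tendsto
            (fun n => ∑ l ∈ Finset.range (k - m + 1),
              ((-1 : ℝ) ^ l * ((k - m).choose l : ℝ)) • Tn (n + l * n₀) x)
            atTop (𝓝 0) :=
  stmt3_general T Tn hκ n₀ m hreg C hbdd k hk
end

section
/- Let u : (1,∞) → (0,∞) be a decreasing function and T ∈ B(X) such that for every λ ∈ ℂ with |λ| > 1 the operator T − λI is invertible and ‖(T − λI)^{−1}‖ ≤ u(|λ|)/(|λ| − 1). If σ(T) ∩ 𝕋 has one-dimensional Hausdorff measure zero, then ‖T^n‖ / (n · u(n/(n−1))) → 0 as n → ∞. -/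
open Filter Topology MeasureTheory

/-!
The resolvent `R z = (1 - z • a)⁻¹` is holomorphic on the open unit disc, and Cauchy's estimate on
the circle of radius `1 - 1/n` gives `‖aⁿ‖ ≤ (n/(n-1))ⁿ (2π)⁻¹ ∫ ‖R‖`, with `(n/(n-1))ⁿ ≤ e²`.
On that circle the resolvent bound reads `‖R‖ ≤ n u(n/(n-1))`. Since `σ(a) ∩ 𝕋` is `H¹`-null, the
angles at which `1 - e^{iθ} a` is not invertible form a Lebesgue-null set; cover it by an open set
`U` of small measure. On the compact set `{r e^{iθ} : r ∈ [0,1], θ ∉ U}` the resolvent is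
continuous, hence bounded by some `M` independent of `n`. Therefore
`‖aⁿ‖ / (n u(n/(n-1))) ≤ e² (M / (n u 2) + |U|)`, which is eventually small.
-/

section Nevanlinna

open Complex Set
open scoped NNReal

theorem abs_sub_le_two_mul_norm_exp_mul_I_sub {x y : ℝ} (h : |x - y| ≤ Real.pi) :
    |x - y| ≤ 2 * ‖exp (x * I) - exp (y * I)‖ := by
  have hfactor : exp (x * I) - exp (y * I) = exp (y * I) * (exp (I * ↑(x - y)) - 1) := by
    rw [mul_sub, mul_one, ← Complex.exp_add]; push_cast; ring_nf
  have hsin : Real.sin (|x - y| / 2) ≤ |Real.sin ((x - y) / 2)| := by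
    rw [show |x - y| / 2 = |(x - y) / 2| by rw [abs_div, abs_two]]
    rcases abs_choice ((x - y) / 2) with h' | h' <;> rw [h']
    · exact le_abs_self _
    · rw [Real.sin_neg]; exact neg_le_abs _
  have hjordan := (Real.mul_le_sin (by positivity) (by linarith)).trans hsin
  rw [hfactor, norm_mul, Complex.norm_exp_ofReal_mul_I, one_mul,
    Complex.norm_exp_I_mul_ofReal_sub_one, norm_mul, Real.norm_eq_abs, Real.norm_eq_abs, abs_two]
  have hπ : 2 / Real.pi * (|x - y| / 2) * 4 ≥ |x - y| := by
    rw [div_mul_eq_mul_div, ge_iff_le, div_mul_eq_mul_div, le_div_iff₀ Real.pi_pos]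
    nlinarith [Real.pi_le_four, abs_nonneg (x - y)]
  linarith

theorem antilipschitzWith_exp_mul_I_Icc (a : ℝ) :
    AntilipschitzWith 2 (fun θ : Icc a (a + 1) => exp (θ * I)) := by
  refine AntilipschitzWith.of_le_mul_dist fun x y => ?_
  rw [Subtype.dist_eq, Real.dist_eq, dist_eq_norm, NNReal.coe_ofNat]
  refine abs_sub_le_two_mul_norm_exp_mul_I_sub ?_
  have hx := x.2; have hy := y.2
  rw [abs_sub_le_iff]
  constructor <;> linarith [hx.1, hx.2, hy.1, hy.2, Real.pi_gt_three]

theorem volume_setOf_exp_mul_I_mem_eq_zero {N : Set ℂ} (hN : μH[1] N = 0) :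
    volume {θ : ℝ | exp (θ * I) ∈ N} = 0 := by
  have hcover : {θ : ℝ | exp (θ * I) ∈ N} ⊆
      ⋃ k : ℤ, (↑) '' ((fun θ : Icc (k : ℝ) (k + 1) => exp (θ * I)) ⁻¹' N) := fun θ hθ =>
    mem_iUnion.2 ⟨⌊θ⌋, ⟨θ, ⟨Int.floor_le θ, (Int.lt_floor_add_one θ).le⟩⟩, hθ, rfl⟩
  refine measure_mono_null hcover (measure_iUnion_null fun k => ?_)
  rw [← hausdorffMeasure_real, isometry_subtype_coe.hausdorffMeasure_image (Or.inl zero_le_one)]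
  simpa [hN] using
    (antilipschitzWith_exp_mul_I_Icc (k : ℝ)).hausdorffMeasure_preimage_le zero_le_one N

theorem intervalIntegrable_indicator_const {a b C : ℝ} {U : Set ℝ} (hab : a ≤ b)
    (hU : MeasurableSet U) : IntervalIntegrable (U.indicator fun _ => C) volume a b := by
  rw [intervalIntegrable_iff_integrableOn_Ioc_of_le hab]
  exact (integrableOn_const measure_Ioc_lt_top.ne).indicator hU

theorem intervalIntegral_const_add_indicator {a b M C : ℝ} {U : Set ℝ} (hab : a ≤ b)
    (hU : MeasurableSet U) :
    ∫ x in a..b, (M + U.indicator (fun _ => C) x) =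
      M * (b - a) + C * volume.real (U ∩ Ioc a b) := by
  rw [intervalIntegral.integral_add intervalIntegrable_const
      (intervalIntegrable_indicator_const hab hU),
    intervalIntegral.integral_const, smul_eq_mul, mul_comm, intervalIntegral.integral_of_le hab,
    integral_indicator_const C hU, measureReal_restrict_apply hU, smul_eq_mul, mul_comm C]

theorem IsCompact.exists_forall_norm_ring_inverse_le {X R : Type*} [TopologicalSpace X]
    [NormedRing R] [CompleteSpace R] {K : Set X} (hK : IsCompact K) {f : X → R}
    (hf : ContinuousOn f K) (hunit : ∀ x ∈ K, IsUnit (f x)) :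
    ∃ M, ∀ x ∈ K, ‖Ring.inverse (f x)‖ ≤ M :=
  hK.exists_bound_of_continuousOn fun x hx =>
    ((hunit x hx).unit_spec ▸ NormedRing.inverse_continuousAt (hunit x hx).unit)
      |>.comp_continuousWithinAt (hf x hx)

theorem one_lt_div_sub_one_le_two {n : ℕ} (hn : 2 ≤ n) :
    1 < (n : ℝ) / (n - 1) ∧ (n : ℝ) / (n - 1) ≤ 2 := by
  have hn' : (2 : ℝ) ≤ n := by exact_mod_cast hn
  constructor
  · rw [one_lt_div (by linarith)]; linarith
  · rw [div_le_iff₀ (by linarith)]; linarith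

theorem div_sub_one_pow_le_exp_two {n : ℕ} (hn : 2 ≤ n) :
    ((n : ℝ) / (n - 1)) ^ n ≤ Real.exp 2 := by
  have hn' : (2 : ℝ) ≤ n := by exact_mod_cast hn
  have hn1 : (n : ℝ) - 1 ≠ 0 := by linarith
  have hbase : (n : ℝ) / (n - 1) ≤ Real.exp (1 / (n - 1)) := by
    calc (n : ℝ) / (n - 1) = 1 / (n - 1) + 1 := by field_simp; ring
      _ ≤ _ := Real.add_one_le_exp _
  calc ((n : ℝ) / (n - 1)) ^ n ≤ Real.exp (1 / (n - 1)) ^ n :=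
        pow_le_pow_left₀ (div_nonneg (by linarith) (by linarith)) hbase n
    _ = Real.exp (n / (n - 1)) := by rw [← Real.exp_nat_mul]; ring_nf
    _ ≤ Real.exp 2 := Real.exp_le_exp.2 (one_lt_div_sub_one_le_two hn).2

theorem tendsto_nhds_zero_of_forall_le_div_add {f : ℕ → ℝ} (hf : ∀ᶠ n in atTop, 0 ≤ f n)
    (h : ∀ δ > 0, ∃ C, ∀ᶠ n in atTop, f n ≤ C / n + δ) : Tendsto f atTop (𝓝 0) := by
  refine tendsto_order.2 ⟨fun b hb => hf.mono fun n hn => hb.trans_le hn, fun b hb => ?_⟩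
  obtain ⟨C, hC⟩ := h (b / 2) (half_pos hb)
  filter_upwards [hC, (tendsto_const_div_atTop_nhds_zero_nat C).eventually_lt_const (half_pos hb)]
    with n hn hCn
  linarith

section Spectrum

variable {𝕜 A : Type*}

theorem isUnit_one_sub_smul_iff_inv_notMem [Field 𝕜] [Ring A] [Algebra 𝕜 A] (a : A) {z : 𝕜}
    (hz : z ≠ 0) : IsUnit (1 - z • a) ↔ z⁻¹ ∉ spectrum 𝕜 a := by
  have h := IsUnit.smul_sub_iff_sub_inv_smul (Units.mk0 z⁻¹ (inv_ne_zero hz)) a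
  simp only [Units.smul_def, Units.val_inv_eq_inv_val, Units.val_mk0, inv_inv] at h
  rw [spectrum.mem_iff, not_not, Algebra.algebraMap_eq_smul_one, h]

section TwoSidedInverse

variable [CommRing 𝕜] [Ring A] [Algebra 𝕜 A] {a S : A} {lam : 𝕜}

theorem mem_resolventSet_of_mul_eq_one (h₁ : (a - lam • 1) * S = 1) (h₂ : S * (a - lam • 1) = 1) :
    lam ∈ resolventSet 𝕜 a :=
  spectrum.mem_resolventSet_iff.2
    ⟨⟨-(a - lam • 1), -S, by rw [neg_mul_neg, h₁], by rw [neg_mul_neg, h₂]⟩,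
      by simp [Algebra.algebraMap_eq_smul_one]⟩

theorem resolvent_eq_neg_of_mul_eq_one (h₁ : (a - lam • 1) * S = 1) (h₂ : S * (a - lam • 1) = 1) :
    resolvent a lam = -S := by
  let v : Aˣ := ⟨-(a - lam • 1), -S, by rw [neg_mul_neg, h₁], by rw [neg_mul_neg, h₂]⟩
  have hv : algebraMap 𝕜 A lam - a = v := by simp [v, Algebra.algebraMap_eq_smul_one]
  rw [resolvent, hv, Ring.inverse_unit]
  rfl

end TwoSidedInverse

variable [NormedField 𝕜] [NormedRing A] [NormedAlgebra 𝕜 A]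

theorem spectralRadius_le_of_forall_mem_resolventSet {a : A} {r : ℝ≥0}
    (h : ∀ k : 𝕜, r < ‖k‖₊ → k ∈ resolventSet 𝕜 a) : spectralRadius 𝕜 a ≤ r :=
  iSup₂_le fun k hk => ENNReal.coe_le_coe.2 (not_lt.1 fun hlt => hk (h k hlt))

theorem norm_ring_inverse_one_sub_smul (a : A) {z : 𝕜} (hz : z ≠ 0) :
    ‖Ring.inverse (1 - z • a)‖ = ‖z‖⁻¹ * ‖resolvent a z⁻¹‖ := by
  have h := spectrum.units_smul_resolvent_self (r := Units.mk0 z⁻¹ (inv_ne_zero hz)) (a := a)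
  simp only [Units.val_mk0, Units.smul_def, Units.val_inv_eq_inv_val, inv_inv, resolvent,
    map_one] at h
  rw [← h, norm_smul, norm_inv]
  rfl

theorem norm_ring_inverse_one_sub_smul_le_of_norm_resolvent_le (a : A) {u : ℝ → ℝ}
    (hres : ∀ lam : 𝕜, 1 < ‖lam‖ → ‖resolvent a lam‖ ≤ u ‖lam‖ / (‖lam‖ - 1)) {z : 𝕜}
    (hz0 : 0 < ‖z‖) (hz1 : ‖z‖ < 1) :
    ‖Ring.inverse (1 - z • a)‖ ≤ u ‖z‖⁻¹ / (1 - ‖z‖) := by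
  have hlam : 1 < ‖z⁻¹‖ := by rw [norm_inv]; exact (one_lt_inv₀ hz0).2 hz1
  have h1 : 1 - ‖z‖ ≠ 0 := by linarith
  have h2 : ‖z‖⁻¹ - 1 ≠ 0 := by rw [norm_inv] at hlam; linarith
  rw [norm_ring_inverse_one_sub_smul a (norm_pos_iff.1 hz0)]
  calc ‖z‖⁻¹ * ‖resolvent a z⁻¹‖ ≤ ‖z‖⁻¹ * (u ‖z⁻¹‖ / (‖z⁻¹‖ - 1)) := by
        gcongr; exact hres _ hlam
    _ = u ‖z‖⁻¹ / (1 - ‖z‖) := by rw [norm_inv]; field_simp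

end Spectrum

section BanachAlgebra

variable {A : Type*} [NormedRing A] [NormedAlgebra ℂ A]

theorem volume_setOf_not_isUnit_one_sub_circleMap_smul_eq_zero (a : A)
    (h : μH[1] (spectrum ℂ a ∩ Metric.sphere 0 1) = 0) :
    volume {θ : ℝ | ¬IsUnit (1 - circleMap 0 1 θ • a)} = 0 := by
  refine measure_mono_null (fun θ hθ => ?_)
    ((Measure.measure_neg volume _).trans (volume_setOf_exp_mul_I_mem_eq_zero h))
  have hexp : (circleMap 0 1 θ)⁻¹ = exp ((-θ : ℝ) * I) := by
    simp [circleMap, ← Complex.exp_neg]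
  have hmem : (circleMap 0 1 θ)⁻¹ ∈ spectrum ℂ a := by
    by_contra hn
    exact hθ ((isUnit_one_sub_smul_iff_inv_notMem a (circleMap_ne_center one_ne_zero)).2 hn)
  rw [hexp] at hmem
  exact ⟨hmem, mem_sphere_zero_iff_norm.2 (norm_exp_ofReal_mul_I _)⟩

variable [CompleteSpace A]

theorem norm_pow_le_of_norm_inverse_one_sub_circleMap_smul_le (a : A) {r : ℝ} (hr0 : 0 < r)
    (hr : ENNReal.ofReal r < (spectralRadius ℂ a)⁻¹) {g : ℝ → ℝ}
    (hg : IntervalIntegrable g volume 0 (2 * Real.pi))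
    (hle : ∀ θ ∈ Icc 0 (2 * Real.pi), ‖Ring.inverse (1 - circleMap 0 r θ • a)‖ ≤ g θ) (n : ℕ) :
    ‖a ^ n‖ ≤ ((2 * Real.pi)⁻¹ * ∫ θ in 0..2 * Real.pi, g θ) * r⁻¹ ^ n := by
  have hdiff := spectrum.differentiableOn_inverse_one_sub_smul (a := a) (r := r.toNNReal) hr
  have hcauchy := hdiff.hasFPowerSeriesOnBall (Real.toNNReal_pos.2 hr0)
  rw [Real.coe_toNNReal r hr0.le] at hcauchy hdiff
  have hcoeff := congrFun ((spectrum.hasFPowerSeriesOnBall_inverse_one_sub_smul ℂ a)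
    |>.hasFPowerSeriesAt.eq_formalMultilinearSeries hcauchy.hasFPowerSeriesAt) n
  have hcont : Continuous fun θ => ‖Ring.inverse (1 - circleMap 0 r θ • a)‖ :=
    (hdiff.continuousOn.comp_continuous (continuous_circleMap 0 r)
      fun θ => circleMap_mem_closedBall 0 hr0.le θ).norm
  calc ‖a ^ n‖ = ‖cauchyPowerSeries (fun z : ℂ => Ring.inverse (1 - z • a)) 0 r n‖ := by
        rw [← hcoeff, ContinuousMultilinearMap.norm_mkPiRing]
    _ ≤ ((2 * Real.pi)⁻¹ * ∫ θ in 0..2 * Real.pi, ‖Ring.inverse (1 - circleMap 0 r θ • a)‖) *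
        |r|⁻¹ ^ n := norm_cauchyPowerSeries_le _ _ _ _
    _ ≤ ((2 * Real.pi)⁻¹ * ∫ θ in 0..2 * Real.pi, g θ) * r⁻¹ ^ n := by
      rw [abs_of_pos hr0]
      gcongr
      exact intervalIntegral.integral_mono_on Real.two_pi_pos.le
        (hcont.intervalIntegrable _ _) hg hle

theorem exists_forall_norm_inverse_one_sub_circleMap_smul_le (a : A)
    (hρ : spectralRadius ℂ a ≤ 1) {U : Set ℝ} (hU : IsOpen U)
    (hbad : {θ : ℝ | ¬IsUnit (1 - circleMap 0 1 θ • a)} ⊆ U) :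
    ∃ M, ∀ r ∈ Icc (0 : ℝ) 1, ∀ θ ∈ Icc 0 (2 * Real.pi) \ U,
      ‖Ring.inverse (1 - circleMap 0 r θ • a)‖ ≤ M := by
  have hunit : ∀ p ∈ Icc (0 : ℝ) 1 ×ˢ (Icc 0 (2 * Real.pi) \ U),
      IsUnit (1 - circleMap 0 p.1 p.2 • a) := by
    rintro ⟨r, θ⟩ ⟨hr, hθ⟩
    rcases hr.2.lt_or_eq with hlt | rfl
    · refine spectrum.isUnit_one_sub_smul_of_lt_inv_radius
        (lt_of_lt_of_le ?_ (ENNReal.one_le_inv.2 hρ))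
      rw [ENNReal.coe_lt_one_iff, ← NNReal.coe_lt_coe, coe_nnnorm, norm_circleMap_zero,
        abs_of_nonneg hr.1]
      exact hlt
    · by_contra h
      exact hθ.2 (hbad h)
  obtain ⟨M, hM⟩ := (isCompact_Icc.prod (isCompact_Icc.diff hU)).exists_forall_norm_ring_inverse_le
    (by unfold circleMap; fun_prop) hunit
  exact ⟨M, fun r hr θ hθ => hM (r, θ) ⟨hr, hθ⟩⟩

theorem norm_pow_le_of_norm_inverse_le (a : A) (hρ : spectralRadius ℂ a ≤ 1) {u : ℝ → ℝ}
    (hres : ∀ z : ℂ, 0 < ‖z‖ → ‖z‖ < 1 → ‖Ring.inverse (1 - z • a)‖ ≤ u ‖z‖⁻¹ / (1 - ‖z‖))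
    {U : Set ℝ} (hU : MeasurableSet U) {M : ℝ} (hM0 : 0 ≤ M)
    (hM : ∀ r ∈ Icc (0 : ℝ) 1, ∀ θ ∈ Icc 0 (2 * Real.pi) \ U,
      ‖Ring.inverse (1 - circleMap 0 r θ • a)‖ ≤ M) {n : ℕ} (hn : 2 ≤ n) :
    ‖a ^ n‖ ≤ (M + n * u (n / (n - 1)) * volume.real (U ∩ Ioc 0 (2 * Real.pi)) / (2 * Real.pi)) *
      ((n : ℝ) / (n - 1)) ^ n := by
  have hn' : (2 : ℝ) ≤ n := by exact_mod_cast hn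
  set r : ℝ := (n - 1) / n with hr
  have hr0 : 0 < r := div_pos (by linarith) (by linarith)
  have hr1 : r < 1 := (div_lt_one (by linarith)).2 (by linarith)
  have hr_inv : r⁻¹ = n / (n - 1) := inv_div _ _
  have h1r : 1 - r = (n : ℝ)⁻¹ := by rw [hr]; field_simp; ring
  have hg : ∀ θ ∈ Icc 0 (2 * Real.pi), ‖Ring.inverse (1 - circleMap 0 r θ • a)‖ ≤
      M + U.indicator (fun _ => n * u (n / (n - 1))) θ := by
    intro θ hθ
    by_cases hθU : θ ∈ U
    · have hz : ‖circleMap 0 r θ‖ = r := by rw [norm_circleMap_zero, abs_of_pos hr0]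
      have h := hres _ (by rw [hz]; exact hr0) (by rw [hz]; exact hr1)
      rw [hz, hr_inv, h1r, div_inv_eq_mul, mul_comm] at h
      rw [indicator_of_mem hθU]
      linarith
    · rw [indicator_of_notMem hθU, add_zero]
      exact hM r ⟨hr0.le, hr1.le⟩ θ ⟨hθ, hθU⟩
  have hρr : ENNReal.ofReal r < (spectralRadius ℂ a)⁻¹ :=
    (ENNReal.ofReal_lt_one.2 hr1).trans_le (ENNReal.one_le_inv.2 hρ)
  have h := norm_pow_le_of_norm_inverse_one_sub_circleMap_smul_le a hr0 hρr
    (intervalIntegrable_const.add (intervalIntegrable_indicator_const Real.two_pi_pos.le hU)) hg n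
  rw [intervalIntegral_const_add_indicator Real.two_pi_pos.le hU, hr_inv, sub_zero] at h
  convert h using 2
  field_simp

theorem tendsto_norm_pow_div_of_norm_resolvent_le (a : A) {u : ℝ → ℝ}
    (hu_pos : ∀ x : ℝ, 1 < x → 0 < u x) (hu_dec : AntitoneOn u (Ioi 1))
    (hρ : spectralRadius ℂ a ≤ 1)
    (hres : ∀ lam : ℂ, 1 < ‖lam‖ → ‖resolvent a lam‖ ≤ u ‖lam‖ / (‖lam‖ - 1))
    (hspec : μH[1] (spectrum ℂ a ∩ Metric.sphere 0 1) = 0) :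
    Tendsto (fun n : ℕ => ‖a ^ n‖ / ((n : ℝ) * u ((n : ℝ) / ((n : ℝ) - 1)))) atTop (𝓝 0) := by
  have hu : ∀ n : ℕ, 2 ≤ n → 0 < u (n / (n - 1)) ∧ u 2 ≤ u (n / (n - 1)) := fun n hn =>
    have h := one_lt_div_sub_one_le_two hn
    ⟨hu_pos _ h.1, hu_dec h.1 (mem_Ioi.2 one_lt_two) h.2⟩
  refine tendsto_nhds_zero_of_forall_le_div_add ?_ fun δ hδ => ?_
  · filter_upwards [eventually_ge_atTop 2] with n hn
    exact div_nonneg (norm_nonneg _) (mul_nonneg n.cast_nonneg (hu n hn).1.le)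
  obtain ⟨U, hbad, hUo, hUv⟩ := Set.exists_isOpen_lt_of_lt _ (ENNReal.ofReal (δ / Real.exp 2))
    (by rw [volume_setOf_not_isUnit_one_sub_circleMap_smul_eq_zero a hspec]; positivity)
  obtain ⟨M, hM⟩ := exists_forall_norm_inverse_one_sub_circleMap_smul_le a hρ hUo hbad
  refine ⟨Real.exp 2 * max M 0 / u 2, ?_⟩
  filter_upwards [eventually_ge_atTop 2] with n hn
  have hv : volume.real (U ∩ Ioc 0 (2 * Real.pi)) / (2 * Real.pi) ≤ δ / Real.exp 2 :=
    (div_le_self measureReal_nonneg (by linarith [Real.pi_gt_three])).trans <|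
      ENNReal.toReal_le_of_le_ofReal (by positivity) <|
        (measure_mono inter_subset_left).trans hUv.le
  have key := norm_pow_le_of_norm_inverse_le a hρ
    (fun z => norm_ring_inverse_one_sub_smul_le_of_norm_resolvent_le a hres) hUo.measurableSet
    (le_max_right M 0) (fun r hr θ hθ => (hM r hr θ hθ).trans (le_max_left M 0)) hn
  set r : ℝ := n / (n - 1)
  set v : ℝ := volume.real (U ∩ Ioc 0 (2 * Real.pi)) / (2 * Real.pi)
  have hur : 0 < u r := (hu n hn).1
  have hu2r : u 2 ≤ u r := (hu n hn).2
  have hu2 : 0 < u 2 := hu_pos 2 one_lt_two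
  have hr0 : 0 < r := zero_lt_one.trans (one_lt_div_sub_one_le_two hn).1
  calc ‖a ^ n‖ / (n * u r) ≤ (max M 0 + n * u r * v) * r ^ n / (n * u r) := by
        gcongr
        exact key.trans_eq (by ring)
    _ = (max M 0 / (n * u r) + v) * r ^ n := by field_simp
    _ ≤ (max M 0 / (n * u 2) + δ / Real.exp 2) * Real.exp 2 := by
        have hM' : max M 0 / (n * u r) ≤ max M 0 / (n * u 2) := by gcongr
        exact mul_le_mul (add_le_add hM' hv) (div_sub_one_pow_le_exp_two hn) (by positivity)
          (by positivity)
    _ = Real.exp 2 * max M 0 / u 2 / n + δ := by field_simp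

end BanachAlgebra

end Nevanlinna

/-- Extended Nevanlinna theorem: if u : (1,∞) → (0,∞) is decreasing, T − λI is
invertible with ‖(T − λI)⁻¹‖ ≤ u(|λ|)/(|λ| − 1) for all |λ| > 1, and σ(T) ∩ 𝕋 has
one-dimensional Hausdorff measure zero, then ‖T^n‖ = o(n · u(n/(n−1))). -/
theorem stmt13 {X : Type*} [NormedAddCommGroup X] [NormedSpace ℂ X] [CompleteSpace X]
    (T : X →L[ℂ] X)
    (u : ℝ → ℝ)
    (hu_pos : ∀ x : ℝ, 1 < x → 0 < u x)
    (hu_dec : AntitoneOn u (Set.Ioi (1 : ℝ)))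
    (hres : ∀ lam : ℂ, 1 < ‖lam‖ →
      ∃ S : X →L[ℂ] X,
        (T - lam • (1 : X →L[ℂ] X)) ∘L S = 1 ∧
        S ∘L (T - lam • (1 : X →L[ℂ] X)) = 1 ∧
        ‖S‖ ≤ u ‖lam‖ / (‖lam‖ - 1))
    (hspec : (MeasureTheory.Measure.hausdorffMeasure 1 : Measure ℂ)
      (spectrum ℂ T ∩ Metric.sphere (0 : ℂ) 1) = 0) :
    Tendsto (fun n : ℕ => ‖T ^ n‖ / ((n : ℝ) * u ((n : ℝ) / ((n : ℝ) - 1))))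
      atTop (𝓝 0) := by
  have hρ : spectralRadius ℂ T ≤ 1 := by
    simpa using spectralRadius_le_of_forall_mem_resolventSet (r := 1) fun lam hlam =>
      let ⟨_, h₁, h₂, _⟩ := hres lam (by exact_mod_cast hlam)
      mem_resolventSet_of_mul_eq_one h₁ h₂
  refine tendsto_norm_pow_div_of_norm_resolvent_le T hu_pos hu_dec hρ (fun lam hlam => ?_) hspec
  obtain ⟨S, h₁, h₂, hS⟩ := hres lam hlam
  rwa [resolvent_eq_neg_of_mul_eq_one h₁ h₂, norm_neg]
end

section
/- Let r ≥ 0 be a real number and T ∈ B(X) such that for every λ ∈ ℂ with |λ| > 1 the operator T − λI is invertible and sup_{|λ|>1} ((|λ|−1)^{r+1}/|λ|^r) · ‖(T − λI)^{−1}‖ < ∞. If σ(T) ∩ 𝕋 has one-dimensional Hausdorff measure zero, then ‖T^n‖ / n^{r+1} → 0 as n → ∞. -/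
/-!
Cauchy's formula for the Taylor coefficients of `z ↦ (1 - z • a)⁻¹` on the circle `|z| = 1 / R`,
`R = 1 + 1/n`, gives `‖aⁿ‖ ≤ R ^ (n + 1) (2π)⁻¹ ∫₀^{2π} ‖(R e^{iθ} - a)⁻¹‖ dθ`, and
`R ^ (n + 1) ≤ 6`.
Split the angles according to whether `e^{iθ}` lies within `δ` of `σ(a)`. For the other angles
`R e^{iθ}` stays in a compact subset of the resolvent set, where the resolvent is bounded by some
`M_δ`; for the bad angles the growth condition bounds it by `C 2^r n^(r+1)`. Hence
`‖aⁿ‖ ≤ 6 M_δ + 6 C 2^r n^(r+1) |{θ ∈ (0, 2π] : dist(e^{iθ}, σ(a)) < δ}|`. As `δ → 0` these angle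
sets shrink to `{θ : e^{iθ} ∈ σ(a)}`, which is Lebesgue-null because `θ ↦ e^{iθ}` is
antilipschitz on intervals of length `π` and `σ(a) ∩ 𝕋` is `μH[1]`-null.
-/

open Filter Topology MeasureTheory Metric Set Real

lemma two_div_pi_mul_abs_le_dist_circleMap (c : ℂ) (R : ℝ) {a b : ℝ} (h : |a - b| ≤ π) :
    2 / π * |R| * |a - b| ≤ dist (circleMap c R a) (circleMap c R b) := by
  have hfactor : circleMap c R a - circleMap c R b =
      R * Complex.exp (b * Complex.I) * (Complex.exp (Complex.I * (a - b : ℝ)) - 1) := by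
    simp only [circleMap, mul_sub, mul_one, mul_assoc, ← Complex.exp_add]
    push_cast
    ring_nf
  have hsin : 2 / π * (|a - b| / 2) ≤ |Real.sin ((a - b) / 2)| := by
    refine (mul_le_sin (by positivity) (by linarith)).trans ?_
    rw [show |a - b| / 2 = |(a - b) / 2| by rw [abs_div, abs_two]]
    rcases abs_choice ((a - b) / 2) with h' | h' <;> rw [h']
    · exact le_abs_self _
    · rw [Real.sin_neg]; exact neg_le_abs _
  rw [dist_eq_norm, hfactor, norm_mul, norm_mul, Complex.norm_exp_ofReal_mul_I,
    Complex.norm_exp_I_mul_ofReal_sub_one, Complex.norm_real, norm_mul]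
  simp only [Real.norm_eq_abs, abs_two]
  have := abs_nonneg R
  nlinarith

lemma antilipschitzWith_restrict_circleMap {a b : ℝ} (hab : b - a ≤ π) :
    AntilipschitzWith (Real.toNNReal (π / 2)) (fun θ : Icc a b => circleMap 0 1 θ) := by
  refine AntilipschitzWith.of_le_mul_dist fun x y => ?_
  have hxy : |(x : ℝ) - y| ≤ π := abs_sub_le_iff.2
    ⟨by linarith [x.2.2, y.2.1], by linarith [x.2.1, y.2.2]⟩
  have := two_div_pi_mul_abs_le_dist_circleMap 0 1 hxy
  rw [abs_one, mul_one] at this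
  rw [Subtype.dist_eq, Real.dist_eq, Real.coe_toNNReal _ (by positivity)]
  have hπ := Real.pi_pos
  calc |(x : ℝ) - y| = π / 2 * (2 / π * |(x : ℝ) - y|) := by field_simp
    _ ≤ π / 2 * dist (circleMap 0 1 x) (circleMap 0 1 y) := by gcongr

theorem volume_preimage_circleMap_eq_zero {F : Set ℂ} (hF : μH[1] F = 0) :
    volume (circleMap 0 1 ⁻¹' F) = 0 := by
  have hcover : circleMap 0 1 ⁻¹' F ⊆
      ⋃ k : ℤ, (↑) '' ((fun θ : Icc (k • π) ((k + 1) • π) => circleMap 0 1 θ) ⁻¹' F) := by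
    intro θ hθ
    obtain ⟨k, hk⟩ := mem_iUnion.1 ((iUnion_Icc_zsmul Real.pi_pos).symm ▸ mem_univ θ)
    exact mem_iUnion.2 ⟨k, ⟨θ, hk⟩, hθ, rfl⟩
  refine measure_mono_null hcover (measure_iUnion_null fun k => ?_)
  rw [← hausdorffMeasure_real, isometry_subtype_coe.hausdorffMeasure_image (Or.inl zero_le_one)]
  refine le_antisymm ?_ zero_le
  refine ((antilipschitzWith_restrict_circleMap ?_).hausdorffMeasure_preimage_le
    zero_le_one F).trans ?_
  · rw [add_smul, one_smul]; linarith
  · rw [hF, mul_zero]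

lemma tendsto_measure_preimage_thickening {α β : Type*} [MeasurableSpace α] [PseudoMetricSpace β]
    [MeasurableSpace β] [OpensMeasurableSpace β] {μ : Measure α} [IsFiniteMeasure μ] {f : α → β}
    (hf : Measurable f) {s : Set β} (hs : IsClosed s) :
    Tendsto (fun δ => μ (f ⁻¹' thickening δ s)) (𝓝[>] 0) (𝓝 (μ (f ⁻¹' s))) := by
  have := tendsto_measure_thickening_of_isClosed (μ := μ.map f) ⟨1, one_pos, measure_ne_top _ _⟩ hs
  simpa only [Measure.map_apply hf isOpen_thickening.measurableSet,
    Measure.map_apply hf hs.measurableSet] using this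

lemma tendsto_div_of_eventually_le_add_mul {α ι : Type*} {F : Filter α} {l : Filter ι} [l.NeBot]
    {u v : α → ℝ} {b : ι → ℝ} (hu : ∀ x, 0 ≤ u x) (hv : Tendsto v F atTop)
    (hb : Tendsto b l (𝓝 0)) (h : ∀ᶠ i in l, ∃ M, ∀ᶠ x in F, u x ≤ M + v x * b i) :
    Tendsto (fun x => u x / v x) F (𝓝 0) := by
  refine tendsto_order.2 ⟨fun ε hε => ?_, fun ε hε => ?_⟩
  · filter_upwards [hv.eventually_gt_atTop 0] with x hx
    exact hε.trans_le (div_nonneg (hu x) hx.le)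
  obtain ⟨i, hbi, M, hM⟩ := ((hb.eventually (gt_mem_nhds (half_pos hε))).and h).exists
  have hMv : Tendsto (fun x => M / v x) F (𝓝 0) := tendsto_const_nhds.div_atTop hv
  filter_upwards [hM, hv.eventually_gt_atTop 0, hMv.eventually (gt_mem_nhds (half_pos hε))]
    with x hx hvx hMx
  calc u x / v x ≤ (M + v x * b i) / v x := by gcongr
    _ = M / v x + b i := by field_simp
    _ < ε := by linarith

lemma spectralRadius_le_of_forall_mem_resolventSet_s14 {𝕜 A : Type*} [NormedField 𝕜] [Ring A]
    [Algebra 𝕜 A] {a : A} {ρ : NNReal} (h : ∀ z : 𝕜, ρ < ‖z‖₊ → z ∈ resolventSet 𝕜 a) :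
    spectralRadius 𝕜 a ≤ ρ :=
  iSup₂_le fun z hz => ENNReal.coe_le_coe.2 (not_lt.1 fun hlt => hz (h z hlt))

lemma resolvent_eq_neg_of_mul_eq_one_s14 {𝕜 A : Type*} [CommRing 𝕜] [Ring A] [Algebra 𝕜 A]
    {a b : A} {z : 𝕜} (h₁ : (a - z • 1) * b = 1) (h₂ : b * (a - z • 1) = 1) :
    z ∈ resolventSet 𝕜 a ∧ resolvent a z = -b := by
  have hneg : algebraMap 𝕜 A z - a = -(a - z • 1) := by
    rw [Algebra.algebraMap_eq_smul_one, neg_sub]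
  let u : Aˣ := ⟨-(a - z • 1), -b, by rw [neg_mul_neg, h₁], by rw [neg_mul_neg, h₂]⟩
  refine ⟨spectrum.mem_resolventSet_iff.2 (hneg ▸ u.isUnit), ?_⟩
  rw [resolvent, hneg]
  exact Ring.inverse_unit u

lemma inverse_one_sub_smul_eq_inv_smul_resolvent {𝕜 A : Type*} [Field 𝕜] [Ring A] [Algebra 𝕜 A]
    {a : A} {z : 𝕜} (hz : z ≠ 0) : Ring.inverse (1 - z • a) = z⁻¹ • resolvent a z⁻¹ := by
  have := spectrum.units_smul_resolvent_self (r := Units.mk0 z⁻¹ (inv_ne_zero hz)) (a := a)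
  simp only [Units.val_mk0, Units.smul_def, Units.val_inv_eq_inv_val, inv_inv] at this
  rw [this, resolvent, map_one]

lemma norm_resolvent_circleMap_le {A : Type*} [NormedRing A] [Algebra ℂ A] {a : A} {C r : ℝ}
    (hr : 0 ≤ r)
    (hres : ∀ z : ℂ, 1 < ‖z‖ → (‖z‖ - 1) ^ (r + 1) / ‖z‖ ^ r * ‖resolvent a z‖ ≤ C)
    {n : ℕ} (hn : 0 < n) (θ : ℝ) :
    ‖resolvent a (circleMap 0 (1 + (n : ℝ)⁻¹) θ)‖ ≤ C * 2 ^ r * (n : ℝ) ^ (r + 1) := by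
  have hn' : (0 : ℝ) < n := Nat.cast_pos.2 hn
  have hR : ‖circleMap 0 (1 + (n : ℝ)⁻¹) θ‖ = 1 + (n : ℝ)⁻¹ := by
    rw [norm_circleMap_zero, abs_of_pos (by positivity)]
  have hbound := hres _ (by rw [hR]; linarith [inv_pos.2 hn'])
  rw [hR, add_sub_cancel_left, Real.inv_rpow hn'.le, div_mul_eq_mul_div, div_le_iff₀
    (by positivity), inv_mul_le_iff₀ (by positivity)] at hbound
  have hRr : (1 + (n : ℝ)⁻¹) ^ r ≤ 2 ^ r := Real.rpow_le_rpow (by positivity)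
    (by linarith [inv_le_one_of_one_le₀ (Nat.one_le_cast.2 hn : (1 : ℝ) ≤ n)]) hr
  have hC : 0 ≤ C := by
    by_contra! hC
    have : (n : ℝ) ^ (r + 1) * (C * (1 + (n : ℝ)⁻¹) ^ r) < 0 :=
      mul_neg_of_pos_of_neg (by positivity) (mul_neg_of_neg_of_pos hC (by positivity))
    linarith [norm_nonneg (resolvent a (circleMap 0 (1 + (n : ℝ)⁻¹) θ))]
  calc _ ≤ (n : ℝ) ^ (r + 1) * (C * (1 + (n : ℝ)⁻¹) ^ r) := hbound
    _ ≤ (n : ℝ) ^ (r + 1) * (C * 2 ^ r) := by gcongr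
    _ = C * 2 ^ r * (n : ℝ) ^ (r + 1) := by ring

lemma norm_resolvent_circleMap_le_add_indicator {A : Type*} [NormedRing A] [Algebra ℂ A] {a : A}
    {C r δ M : ℝ} (hr : 0 ≤ r)
    (hres : ∀ z : ℂ, 1 < ‖z‖ → (‖z‖ - 1) ^ (r + 1) / ‖z‖ ^ r * ‖resolvent a z‖ ≤ C)
    (hM0 : 0 ≤ M)
    (hM : ∀ w ∈ closedBall (0 : ℂ) 2 \ thickening (δ / 2) (spectrum ℂ a), ‖resolvent a w‖ ≤ M)
    {n : ℕ} (hn : 0 < n) (hnδ : (n : ℝ)⁻¹ < δ / 2) (θ : ℝ) :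
    ‖resolvent a (circleMap 0 (1 + (n : ℝ)⁻¹) θ)‖ ≤
      M + (circleMap 0 1 ⁻¹' thickening δ (spectrum ℂ a)).indicator
        (fun _ => C * 2 ^ r * (n : ℝ) ^ (r + 1)) θ := by
  have hn' : (0 : ℝ) < n := Nat.cast_pos.2 hn
  by_cases hθ : θ ∈ circleMap 0 1 ⁻¹' thickening δ (spectrum ℂ a)
  · rw [indicator_of_mem hθ]; linarith [norm_resolvent_circleMap_le hr hres hn θ]
  rw [indicator_of_notMem hθ, add_zero]
  refine hM _ ⟨?_, fun hmem => hθ ?_⟩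
  · rw [mem_closedBall_zero_iff, norm_circleMap_zero, abs_of_pos (by positivity)]
    linarith [inv_le_one_of_one_le₀ (Nat.one_le_cast.2 hn : (1 : ℝ) ≤ n)]
  have hdist : dist (circleMap 0 1 θ) (circleMap 0 (1 + (n : ℝ)⁻¹) θ) = (n : ℝ)⁻¹ := by
    have hsub : circleMap 0 1 θ - circleMap 0 (1 + (n : ℝ)⁻¹) θ =
        -(((n : ℝ)⁻¹ : ℝ) : ℂ) * Complex.exp (θ * Complex.I) := by
      simp only [circleMap]; push_cast; ring
    rw [dist_eq_norm, hsub, norm_mul, norm_neg, Complex.norm_real, Complex.norm_exp_ofReal_mul_I,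
      mul_one, Real.norm_of_nonneg (inv_nonneg.2 hn'.le)]
  have hsub := thickening_thickening_subset (δ / 2) (δ / 2) (spectrum ℂ a)
  rw [add_halves] at hsub
  exact hsub (ball_subset_thickening hmem _ (hdist.trans_lt hnδ))

section BanachAlgebra

variable {A : Type*} [NormedRing A] [NormedAlgebra ℂ A] [CompleteSpace A]

theorem norm_pow_le_integral_norm_resolvent {a : A} {R : ℝ}
    (hR : spectralRadius ℂ a < ENNReal.ofReal R) (n : ℕ) :
    ‖a ^ n‖ ≤ R ^ (n + 1) * ((2 * π)⁻¹ * ∫ θ in 0..2 * π, ‖resolvent a (circleMap 0 R θ)‖) := by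
  have hR0 : 0 < R := ENNReal.ofReal_pos.1 (pos_of_gt hR)
  set s : NNReal := ⟨R⁻¹, inv_nonneg.2 hR0.le⟩
  have hsR : (s : ℝ) = R⁻¹ := rfl
  have hs : (s : ENNReal) < (spectralRadius ℂ a)⁻¹ := by
    rw [ENNReal.lt_inv_iff_lt_inv, ← ENNReal.ofReal_coe_nnreal, hsR,
      ← ENNReal.ofReal_inv_of_pos (inv_pos.2 hR0), inv_inv]
    exact hR
  have hseries := (spectrum.differentiableOn_inverse_one_sub_smul hs).hasFPowerSeriesOnBall
    (inv_pos.2 hR0)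
  have hcoeff := congrFun ((spectrum.hasFPowerSeriesOnBall_inverse_one_sub_smul ℂ a
    ).hasFPowerSeriesAt.eq_formalMultilinearSeries hseries.hasFPowerSeriesAt) n
  have hnorm := norm_cauchyPowerSeries_le (fun z : ℂ => Ring.inverse (1 - z • a)) 0 s n
  rw [← hcoeff, ContinuousMultilinearMap.norm_mkPiRing] at hnorm
  have hinverse (θ : ℝ) : ‖Ring.inverse (1 - circleMap 0 R⁻¹ θ • a)‖ =
      R * ‖resolvent a (circleMap 0 R (-θ))‖ := by
    rw [inverse_one_sub_smul_eq_inv_smul_resolvent (circleMap_ne_center (by simp [hR0.ne'])),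
      circleMap_zero_inv, inv_inv, norm_smul, norm_circleMap_zero, abs_of_pos hR0]
  have hperiodic : Function.Periodic (fun θ => ‖resolvent a (circleMap 0 R θ)‖) (2 * π) :=
    fun θ => by simp only [periodic_circleMap 0 R θ]
  have hreflect : ∫ θ in 0..2 * π, ‖resolvent a (circleMap 0 R (-θ))‖ =
      ∫ θ in 0..2 * π, ‖resolvent a (circleMap 0 R θ)‖ := by
    rw [intervalIntegral.integral_comp_neg (fun θ => ‖resolvent a (circleMap 0 R θ)‖), neg_zero]
    simpa using hperiodic.intervalIntegral_add_eq (-(2 * π)) 0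
  calc ‖a ^ n‖ ≤ _ := hnorm
    _ = _ := by
      simp only [hsR, hinverse, intervalIntegral.integral_const_mul, hreflect, abs_inv,
        abs_of_pos hR0, inv_inv]
      ring

lemma continuous_norm_resolvent_circleMap {a : A} {R : ℝ}
    (hR : spectralRadius ℂ a < ENNReal.ofReal R) :
    Continuous fun θ => ‖resolvent a (circleMap 0 R θ)‖ := by
  have hR0 : 0 < R := ENNReal.ofReal_pos.1 (pos_of_gt hR)
  refine continuous_iff_continuousAt.2 fun θ => ?_
  have hmem : circleMap 0 R θ ∈ resolventSet ℂ a := by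
    refine spectrum.mem_resolventSet_of_spectralRadius_lt ?_
    rwa [← enorm_eq_nnnorm, ← ofReal_norm, norm_circleMap_zero, abs_of_pos hR0]
  exact ((spectrum.hasDerivAt_resolvent_const_left hmem).continuousAt.comp
    (continuous_circleMap 0 R).continuousAt).norm

lemma exists_norm_resolvent_le_of_isCompact (a : A) {K : Set ℂ} (hK : IsCompact K)
    (hKσ : Disjoint K (spectrum ℂ a)) : ∃ M, 0 ≤ M ∧ ∀ w ∈ K, ‖resolvent a w‖ ≤ M := by
  have hcont : ContinuousOn (resolvent a) K := fun w hw =>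
    (spectrum.hasDerivAt_resolvent_const_left
      (not_not.1 (disjoint_left.1 hKσ hw))).continuousAt.continuousWithinAt
  obtain ⟨M, hM⟩ := hK.exists_bound_of_continuousOn hcont
  exact ⟨max M 0, le_max_right _ _, fun w hw => (hM w hw).trans (le_max_left _ _)⟩

theorem norm_pow_le_of_resolvent_growth {a : A} {C r δ M : ℝ} (hρ : spectralRadius ℂ a ≤ 1)
    (hr : 0 ≤ r)
    (hres : ∀ z : ℂ, 1 < ‖z‖ → (‖z‖ - 1) ^ (r + 1) / ‖z‖ ^ r * ‖resolvent a z‖ ≤ C)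
    (hM0 : 0 ≤ M)
    (hM : ∀ w ∈ closedBall (0 : ℂ) 2 \ thickening (δ / 2) (spectrum ℂ a), ‖resolvent a w‖ ≤ M)
    {n : ℕ} (hn : 0 < n) (hnδ : (n : ℝ)⁻¹ < δ / 2) :
    ‖a ^ n‖ ≤ 6 * M + (n : ℝ) ^ (r + 1) * (6 * (C * 2 ^ r) *
      (volume.restrict (Ioc 0 (2 * π))).real (circleMap 0 1 ⁻¹' thickening δ (spectrum ℂ a))) := by
  set R : ℝ := 1 + (n : ℝ)⁻¹
  set B := circleMap 0 1 ⁻¹' thickening δ (spectrum ℂ a)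
  set V := (volume.restrict (Ioc 0 (2 * π))).real B
  set c := C * 2 ^ r * (n : ℝ) ^ (r + 1)
  have hR1 : 1 < R := lt_add_of_pos_right 1 (inv_pos.2 (Nat.cast_pos.2 hn))
  have hρR : spectralRadius ℂ a < ENNReal.ofReal R := hρ.trans_lt <| by
    rw [← ENNReal.ofReal_one]; exact (ENNReal.ofReal_lt_ofReal_iff (by linarith)).2 hR1
  have hBmeas : MeasurableSet B :=
    isOpen_thickening.measurableSet.preimage (measurable_circleMap 0 1)
  have hind : IntervalIntegrable (B.indicator fun _ => c) volume 0 (2 * π) :=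
    (intervalIntegrable_iff_integrableOn_Ioc_of_le (by positivity)).2
      ((integrable_const c).indicator hBmeas)
  have hint : ∫ θ in 0..2 * π, ‖resolvent a (circleMap 0 R θ)‖ ≤ 2 * π * M + V * c :=
    calc ∫ θ in 0..2 * π, ‖resolvent a (circleMap 0 R θ)‖
        ≤ ∫ θ in 0..2 * π, (M + B.indicator (fun _ => c) θ) :=
          intervalIntegral.integral_mono_on (by positivity)
            ((continuous_norm_resolvent_circleMap hρR).intervalIntegrable _ _)
            (intervalIntegrable_const.add hind) fun θ _ =>
              norm_resolvent_circleMap_le_add_indicator hr hres hM0 hM hn hnδ θ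
      _ = 2 * π * M + V * c := by
        rw [intervalIntegral.integral_add intervalIntegrable_const hind,
          intervalIntegral.integral_const, intervalIntegral.integral_of_le (by positivity),
          integral_indicator_const c hBmeas, smul_eq_mul, smul_eq_mul, sub_zero]
  have hRpow : R ^ (n + 1) ≤ 6 :=
    calc R ^ (n + 1) = R ^ n * R := pow_succ R n
      _ ≤ 3 * 2 := by
        gcongr
        · exact Real.one_add_inv_pow_le_exp.trans (Real.exp_one_lt_d9.le.trans (by norm_num))
        · linarith [inv_le_one_of_one_le₀ (Nat.one_le_cast.2 hn : (1 : ℝ) ≤ n)]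
      _ = 6 := by norm_num
  have hVc : 0 ≤ V * c :=
    mul_nonneg measureReal_nonneg ((norm_nonneg _).trans (norm_resolvent_circleMap_le hr hres hn 0))
  calc ‖a ^ n‖ ≤ R ^ (n + 1) * ((2 * π)⁻¹ * ∫ θ in 0..2 * π, ‖resolvent a (circleMap 0 R θ)‖) :=
        norm_pow_le_integral_norm_resolvent hρR n
    _ ≤ 6 * ((2 * π)⁻¹ * (2 * π * M + V * c)) := by
        refine mul_le_mul hRpow (by gcongr) ?_ (by norm_num)
        exact mul_nonneg (by positivity)
          (intervalIntegral.integral_nonneg (by positivity) fun θ _ => norm_nonneg _)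
    _ ≤ 6 * (M + V * c) := by
        rw [mul_add, ← mul_assoc, inv_mul_cancel₀ (by positivity), one_mul]
        gcongr 6 * (M + ?_)
        exact mul_le_of_le_one_left hVc (inv_le_one_of_one_le₀ (by linarith [pi_gt_three]))
    _ = _ := by ring

theorem tendsto_norm_pow_div_rpow_of_resolvent_growth {a : A} {C r : ℝ} (hr : 0 ≤ r)
    (hres : ∀ z : ℂ, 1 < ‖z‖ →
      z ∈ resolventSet ℂ a ∧ (‖z‖ - 1) ^ (r + 1) / ‖z‖ ^ r * ‖resolvent a z‖ ≤ C)
    (hnull : μH[1] (spectrum ℂ a ∩ sphere 0 1) = 0) :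
    Tendsto (fun n : ℕ => ‖a ^ n‖ / (n : ℝ) ^ (r + 1)) atTop (𝓝 0) := by
  set μ := volume.restrict (Ioc 0 (2 * π))
  have hρ : spectralRadius ℂ a ≤ 1 := by
    simpa using spectralRadius_le_of_forall_mem_resolventSet_s14 (ρ := 1) fun z hz =>
      (hres z (NNReal.coe_lt_coe.2 hz)).1
  have hσ : μ (circleMap 0 1 ⁻¹' spectrum ℂ a) = 0 := by
    have hsphere : circleMap 0 1 ⁻¹' spectrum ℂ a = circleMap 0 1 ⁻¹' (spectrum ℂ a ∩ sphere 0 1) :=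
      by ext θ; simp
    rw [hsphere]
    exact le_antisymm ((Measure.restrict_apply_le _ _).trans
      (volume_preimage_circleMap_eq_zero hnull).le) zero_le
  have hbad : Tendsto (fun δ => μ.real (circleMap 0 1 ⁻¹' thickening δ (spectrum ℂ a)))
      (𝓝[>] 0) (𝓝 0) := by
    have := tendsto_measure_preimage_thickening (μ := μ) (measurable_circleMap 0 1)
      (spectrum.isClosed a)
    rw [hσ] at this
    exact (ENNReal.tendsto_toReal ENNReal.zero_ne_top).comp this
  refine tendsto_div_of_eventually_le_add_mul (fun n => norm_nonneg _)
    ((tendsto_rpow_atTop (by linarith)).comp tendsto_natCast_atTop_atTop)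
    (by simpa using hbad.const_mul (6 * (C * 2 ^ r))) ?_
  filter_upwards [self_mem_nhdsWithin] with δ (hδ : 0 < δ)
  obtain ⟨M, hM0, hM⟩ := exists_norm_resolvent_le_of_isCompact a
    ((isCompact_closedBall 0 2).diff isOpen_thickening)
    (disjoint_sdiff_left.mono_right (self_subset_thickening (half_pos hδ) _))
  refine ⟨6 * M, ?_⟩
  filter_upwards [eventually_gt_atTop 0,
    tendsto_inv_atTop_nhds_zero_nat.eventually (gt_mem_nhds (half_pos hδ))] with n hn hnδ
  exact norm_pow_le_of_resolvent_growth hρ hr (fun z hz => (hres z hz).2) hM0 hM hn hnδ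

end BanachAlgebra

/-- If for some r ≥ 0 the resolvent satisfies
sup_{|λ|>1} ((|λ|−1)^{r+1}/|λ|^r)·‖(T − λI)⁻¹‖ < ∞ and σ(T) ∩ 𝕋 has one-dimensional
Hausdorff measure zero, then ‖T^n‖ = o(n^{r+1}). -/
theorem stmt14 {X : Type*} [NormedAddCommGroup X] [NormedSpace ℂ X] [CompleteSpace X]
    (T : X →L[ℂ] X)
    (r : ℝ) (hr : 0 ≤ r)
    (hres : ∃ C : ℝ, ∀ lam : ℂ, 1 < ‖lam‖ →
      ∃ S : X →L[ℂ] X,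
        (T - lam • (1 : X →L[ℂ] X)) ∘L S = 1 ∧
        S ∘L (T - lam • (1 : X →L[ℂ] X)) = 1 ∧
        ((‖lam‖ - 1) ^ (r + 1) / ‖lam‖ ^ r) * ‖S‖ ≤ C)
    (hspec : (MeasureTheory.Measure.hausdorffMeasure 1 : Measure ℂ)
      (spectrum ℂ T ∩ Metric.sphere (0 : ℂ) 1) = 0) :
    Tendsto (fun n : ℕ => ‖T ^ n‖ / (n : ℝ) ^ (r + 1)) atTop (𝓝 0) := by
  obtain ⟨C, hC⟩ := hres
  refine tendsto_norm_pow_div_rpow_of_resolvent_growth (C := C) hr (fun z hz => ?_) hspec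
  obtain ⟨S, hS₁, hS₂, hSC⟩ := hC z hz
  obtain ⟨hmem, hresolvent⟩ := resolvent_eq_neg_of_mul_eq_one_s14 hS₁ hS₂
  exact ⟨hmem, by rwa [hresolvent, norm_neg]⟩
end
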